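/- arXiv:2112.15591 — 2 statements merged into one kernel-verified Lean document; each statement's English description precedes it below -/
import Mathlib

section
/- The sequence c_n := n! e^n / (n + 1/2)^{n + 1/2} is nondecreasing in n for integers n ≥ 1. -/
lemma taylor_log (y : ℝ) (hy0 : 0 < y) (hy : y ≤ 1/4) :
    (1+y) * Real.log (1+y) - (1-y) * Real.log (1-y) ≤ 2*y := by
  have h1 : |y| < 1 := by rw [abs_of_pos hy0]; linarith
  have h2 : |(-y)| < 1 := by rwa [abs_neg]
  have A := Real.abs_log_sub_add_sum_range_le h1 4
  have B := Real.abs_log_sub_add_sum_range_le h2 4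
  rw [abs_of_pos hy0] at A
  rw [abs_neg, abs_of_pos hy0] at B
  simp only [Finset.sum_range_succ, Finset.sum_range_zero] at A B
  rw [abs_le] at A B
  obtain ⟨A1, A2⟩ := A
  obtain ⟨B1, B2⟩ := B
  norm_num at A1 A2 B1 B2
  have h1y : (0:ℝ) < 1 - y := by linarith
  have hT : 0 ≤ y^5 / (1-y) := by positivity
  have hU : Real.log (1+y) ≤ y - y^2/2 + y^3/3 - y^4/4 + y^5/(1-y) := by
    nlinarith [B2]
  have hLo : -(y + y^2/2 + y^3/3 + y^4/4) - y^5/(1-y) ≤ Real.log (1-y) := by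
    nlinarith [A1]
  have m1 := mul_le_mul_of_nonneg_left hU (by linarith : (0:ℝ) ≤ 1+y)
  have m2 := mul_le_mul_of_nonneg_left hLo (by linarith : (0:ℝ) ≤ 1-y)
  have hTb : y^5/(1-y) ≤ (4/3) * y^5 := by
    rw [div_le_iff₀ h1y]; nlinarith [pow_pos hy0 5]
  have hy2 : y^2 ≤ 1/16 := by nlinarith
  have h5 : y^5 ≤ y^3/16 := by
    nlinarith [mul_le_mul_of_nonneg_left hy2 (le_of_lt (pow_pos hy0 3))]
  linarith [m1, m2, hTb, h5]

lemma key3 (y : ℝ) (hy0 : 0 < y) (hy : y ≤ 1/4) :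
    ((1+y)/(2*y)) * Real.log ((1+y)/(2*y)) ≤
      Real.log (1/(2*y)) + 1 + ((1-y)/(2*y)) * Real.log ((1-y)/(2*y)) := by
  have h1y : (0:ℝ) < 1 - y := by linarith
  have h2y : (0:ℝ) < 2*y := by linarith
  have l1 : Real.log ((1+y)/(2*y)) = Real.log (1+y) - Real.log (2*y) :=
    Real.log_div (by linarith) (by linarith)
  have l2 : Real.log ((1-y)/(2*y)) = Real.log (1-y) - Real.log (2*y) :=
    Real.log_div (by linarith) (by linarith)
  have l3 : Real.log (1/(2*y)) = - Real.log (2*y) := by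
    rw [one_div, Real.log_inv]
  rw [l1, l2, l3]
  have key := taylor_log y hy0 hy
  rw [div_mul_eq_mul_div, div_mul_eq_mul_div, div_le_iff₀ h2y]
  have expand : (-Real.log (2*y) + 1 + (1-y) * (Real.log (1-y) - Real.log (2*y)) / (2*y)) * (2*y)
      = (-Real.log (2*y) + 1) * (2*y) + (1-y) * (Real.log (1-y) - Real.log (2*y)) := by
    field_simp
  rw [expand]
  nlinarith [key]

theorem stmt_2 (n : ℕ) (hn : 1 ≤ n) :
    (Nat.factorial n : ℝ) * Real.exp n / ((n : ℝ) + 1/2) ^ ((n : ℝ) + 1/2) ≤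
      (Nat.factorial (n + 1) : ℝ) * Real.exp (n + 1) /
        (((n : ℝ) + 1) + 1/2) ^ (((n : ℝ) + 1) + 1/2) := by
  have hn1 : (1:ℝ) ≤ (n:ℝ) := by exact_mod_cast hn
  have hb : (0:ℝ) < (n:ℝ) + 1/2 := by linarith
  have hd : (0:ℝ) < ((n:ℝ) + 1) + 1/2 := by linarith
  have hB : (0:ℝ) < ((n:ℝ) + 1/2) ^ ((n:ℝ) + 1/2) := Real.rpow_pos_of_pos hb _
  have hD : (0:ℝ) < (((n:ℝ) + 1) + 1/2) ^ (((n:ℝ) + 1) + 1/2) := Real.rpow_pos_of_pos hd _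
  rw [div_le_div_iff₀ hB hD]
  -- key inequality: D ≤ (n+1) * e * B
  set y : ℝ := 1/(2*(n:ℝ)+2) with hydef
  have hy0 : 0 < y := by positivity
  have hy14 : y ≤ 1/4 := by
    rw [hydef, div_le_div_iff₀ (by linarith) (by norm_num)]; linarith
  have e1 : (n:ℝ) + 1/2 = (1-y)/(2*y) := by
    rw [hydef]; field_simp; ring
  have e2 : ((n:ℝ) + 1) + 1/2 = (1+y)/(2*y) := by
    rw [hydef]; field_simp
  have e3 : (n:ℝ) + 1 = 1/(2*y) := by
    rw [hydef]; field_simp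
  have hkey : (((n:ℝ) + 1) + 1/2) ^ (((n:ℝ) + 1) + 1/2)
      ≤ ((n:ℝ) + 1) * Real.exp 1 * (((n:ℝ) + 1/2) ^ ((n:ℝ) + 1/2)) := by
    have hpos : (0:ℝ) < ((n:ℝ) + 1) * Real.exp 1 * (((n:ℝ) + 1/2) ^ ((n:ℝ) + 1/2)) := by
      positivity
    rw [← Real.log_le_log_iff hD hpos]
    rw [Real.log_rpow hd]
    rw [Real.log_mul (by positivity) (ne_of_gt hB), Real.log_mul (by positivity) (by positivity),
      Real.log_exp, Real.log_rpow hb]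
    calc (((n:ℝ) + 1) + 1/2) * Real.log (((n:ℝ) + 1) + 1/2)
        = ((1+y)/(2*y)) * Real.log ((1+y)/(2*y)) := by rw [e2]
      _ ≤ Real.log (1/(2*y)) + 1 + ((1-y)/(2*y)) * Real.log ((1-y)/(2*y)) :=
          key3 y hy0 hy14
      _ = Real.log ((n:ℝ)+1) + 1 + ((n:ℝ) + 1/2) * Real.log ((n:ℝ) + 1/2) := by
          rw [e1, e3]
  have hfac : (Nat.factorial (n+1) : ℝ) = ((n:ℝ) + 1) * (Nat.factorial n : ℝ) := by
    rw [Nat.factorial_succ]; push_cast; ring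
  have hexp : Real.exp ((n:ℝ) + 1) = Real.exp n * Real.exp 1 := by
    rw [← Real.exp_add]
  have hA : (0:ℝ) < (Nat.factorial n : ℝ) * Real.exp n := by positivity
  calc (Nat.factorial n : ℝ) * Real.exp n * ((((n:ℝ) + 1) + 1/2) ^ (((n:ℝ) + 1) + 1/2))
      ≤ (Nat.factorial n : ℝ) * Real.exp n * (((n:ℝ) + 1) * Real.exp 1 * (((n:ℝ) + 1/2) ^ ((n:ℝ) + 1/2))) := by
        exact mul_le_mul_of_nonneg_left hkey (le_of_lt hA)
    _ = (Nat.factorial (n+1) : ℝ) * Real.exp ((n:ℝ) + 1) * (((n:ℝ) + 1/2) ^ ((n:ℝ) + 1/2)) := by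
        rw [hfac, hexp]; ring
end

section
/- Let f : ℝ → ℝ be m-times continuously differentiable, m ≥ 2, and let x_1, ..., x_n ∈ ℝ with n ≥ m, sample mean x̄ = (1/n)Σ_j x_j. Define the U-statistics ū^{(k)} = ((n-k)!/n!) Σ_{1 ≤ j_1 ≠ ⋯ ≠ j_k ≤ n} (x_{j_1} - x̄)⋯(x_{j_k} - x̄) and the estimator f̂ = f(x̄) + Σ_{k=2}^m f^{(k)}(x̄) ū^{(k)}/k!. Then for every θ ∈ ℝ, writing ε_j = x_j - θ, ε̄ = x̄ - θ, and ε̄^{(k)} = ((n-k)!/n!) Σ_{1 ≤ j_1 ≠ ⋯ ≠ j_k ≤ n} ε_{j_1}⋯ε_{j_k}, one has f̂ = f(θ) + Σ_{k=1}^m f^{(k)}(θ) ε̄^{(k)}/k! − Rem_m, where Rem_m = Σ_{k=0}^m (−1)^{m-k} ⟨J^{m-k} Δ^{(m)}⟩ ε̄^{m-k} ε̄^{(k)}/k!, with Δ^{(m)}(t) = f^{(m)}(x̄ + t(θ − x̄)) − f^{(m)}(x̄), J^0 h = h(1), and J^α h = ∫_0^1 h(t)(1-t)^{α-1} dt / Γ(α)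 for α > 0. -/
open MeasureTheory Finset intervalIntegral

/-- The completely degenerate `U`-statistic
`((n-k)!/n!) Σ_{1 ≤ j_1 ≠ ⋯ ≠ j_k ≤ n} v_{j_1} ⋯ v_{j_k}`. -/
noncomputable def udeg (n k : ℕ) (v : Fin n → ℝ) : ℝ :=
  ((Nat.factorial (n - k) : ℝ) / (Nat.factorial n)) *
    ∑ p ∈ (Finset.univ : Finset (Fin k → Fin n)).filter Function.Injective, ∏ i, v (p i)

/-- The Riemann–Liouville integral `J^α h` at `1` for natural `α`:
`J^0 h = h 1` and `J^α h = ∫_0^1 h(t)(1-t)^{α-1} dt / Γ(α)` with `Γ(α) = (α-1)!`. -/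
noncomputable def Jint (α : ℕ) (h : ℝ → ℝ) : ℝ :=
  if α = 0 then h 1
  else (∫ t in (0:ℝ)..1, h t * (1 - t) ^ (α - 1)) / (Nat.factorial (α - 1))


lemma sum_inj_eq_sum_emb {k n : ℕ} (F : (Fin k → Fin n) → ℝ) :
    ∑ p ∈ (Finset.univ : Finset (Fin k → Fin n)).filter Function.Injective, F p
      = ∑ e : Fin k ↪ Fin n, F e := by
  rw [Finset.sum_subtype ((Finset.univ : Finset (Fin k → Fin n)).filter Function.Injective)
    (p := Function.Injective) (fun x => by simp) F]
  exact Fintype.sum_equiv (Equiv.subtypeInjectiveEquivEmbedding (Fin k) (Fin n))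
    _ _ (fun f => rfl)

lemma card_not_mem_range_emb {k n : ℕ} (g : Fin k ↪ Fin n) :
    Fintype.card {i // i ∉ Set.range g} = n - k := by
  rw [Fintype.card_subtype_compl]
  rw [Fintype.card_fin]
  congr 1
  exact (Fintype.card_congr (Equiv.refl _)).trans ((Fintype.card_range g).trans (Fintype.card_fin k))

lemma sum_emb_tail {n : ℕ} (j : ℕ) (v : Fin n → ℝ) :
    ∀ k, ∀ (h : j ≤ k), k ≤ n →
    ∑ f : Fin k ↪ Fin n, ∏ i : Fin j, v (f ⟨k - j + i.1, by omega⟩)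
      = ((n - j).descFactorial (k - j) : ℝ) * ∑ g : Fin j ↪ Fin n, ∏ i, v (g i) := by
  intro k
  induction k with
  | zero => intro h _; interval_cases j; simp
  | succ k ih =>
    intro h hkn
    rcases Nat.lt_or_ge j (k+1) with hj | hj
    · have hjk : j ≤ k := by omega
      rw [← (Equiv.embeddingFinSucc k (Fin n)).symm.sum_comp]
      have key : ∀ s : (Σ (e : Fin k ↪ Fin n), {i // i ∉ Set.range e}),
          (∏ i : Fin j, v (((Equiv.embeddingFinSucc k (Fin n)).symm s) ⟨k + 1 - j + i.1, by omega⟩))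
            = ∏ i : Fin j, v (s.1 ⟨k - j + i.1, by omega⟩) := by
        intro s
        refine Finset.prod_congr rfl (fun i _ => ?_)
        have h2 : ((⟨k + 1 - j + i.1, by omega⟩ : Fin (k+1)))
            = Fin.succ ⟨k - j + i.1, by omega⟩ := by
          apply Fin.ext; simp only [Fin.succ]; omega
        rw [h2, Equiv.coe_embeddingFinSucc_symm s, Fin.cons_succ]
      rw [Fintype.sum_congr _ _ key, ← Finset.univ_sigma_univ, Finset.sum_sigma]
      simp only [Finset.sum_const, Finset.card_univ, card_not_mem_range_emb, nsmul_eq_mul]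
      rw [← Finset.mul_sum, ih hjk (by omega)]
      rw [show k + 1 - j = (k - j) + 1 by omega, Nat.descFactorial_succ]
      push_cast
      rw [show n - j - (k - j) = n - k by omega]
      ring
    · have hj' : j = k + 1 := by omega
      subst hj'
      simp only [Nat.sub_self, Nat.descFactorial_zero, Nat.cast_one, one_mul]
      apply Fintype.sum_congr
      intro f
      refine Finset.prod_congr rfl (fun i _ => ?_)
      congr 1
      apply Fin.ext; simp

-- a permutation mapping T onto T₀, given equal cards
lemma exists_perm_image {α : Type*} [Fintype α] [DecidableEq α] {T T₀ : Finset α}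
    (h : T.card = T₀.card) : ∃ σ : Equiv.Perm α, T.image σ = T₀ := by
  have hc : Tᶜ.card = T₀ᶜ.card := by
    simp [Finset.card_compl, h]
  let e1 : {x // x ∈ T} ≃ {x // x ∈ T₀} :=
    (T.equivFinOfCardEq rfl).trans (T₀.equivFinOfCardEq h.symm).symm
  let e2 : {x // x ∈ Tᶜ} ≃ {x // x ∈ T₀ᶜ} :=
    (Tᶜ.equivFinOfCardEq rfl).trans (T₀ᶜ.equivFinOfCardEq hc.symm).symm
  let e2' : {x // ¬ x ∈ T} ≃ {x // ¬ x ∈ T₀} :=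
    ((Equiv.subtypeEquivRight (fun x => by simp)).trans e2).trans
      (Equiv.subtypeEquivRight (fun x => by simp))
  let σ : Equiv.Perm α :=
    ((Equiv.sumCompl (· ∈ T)).symm.trans ((e1.sumCongr e2').trans
      (Equiv.sumCompl (· ∈ T₀))))
  refine ⟨σ, ?_⟩
  apply Finset.eq_of_subset_of_card_le
  · intro y hy
    simp only [Finset.mem_image] at hy
    obtain ⟨a, ha, rfl⟩ := hy
    have : σ a = ((e1 ⟨a, ha⟩ : {x // x ∈ T₀}) : α) := by
      simp [σ, Equiv.sumCompl_symm_apply_of_pos ha]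
    rw [this]
    exact (e1 ⟨a, ha⟩).2
  · rw [Finset.card_image_of_injective _ σ.injective, h]

lemma sum_emb_subset {n k j : ℕ} (hj : j ≤ k) (hk : k ≤ n) (v : Fin n → ℝ)
    (T : Finset (Fin k)) (hT : T.card = j) :
    ∑ f : Fin k ↪ Fin n, ∏ i ∈ T, v (f i)
      = ((n - j).descFactorial (k - j) : ℝ) * ∑ g : Fin j ↪ Fin n, ∏ i, v (g i) := by
  classical
  set ι : Fin j → Fin k := fun i => ⟨k - j + i.1, by omega⟩ with hι
  have hιinj : Function.Injective ι := by
    intro a b hab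
    apply Fin.ext
    have := Fin.mk.injEq .. ▸ hab
    simp only [hι] at hab
    have : (⟨k - j + a.1, by omega⟩ : Fin k).1 = (⟨k - j + b.1, by omega⟩ : Fin k).1 := by rw [hab]
    simp at this; omega
  set T₀ : Finset (Fin k) := Finset.image ι Finset.univ with hT₀
  have hcard : T.card = T₀.card := by
    rw [hT₀, Finset.card_image_of_injective _ hιinj, Finset.card_univ, Fintype.card_fin, hT]
  obtain ⟨σ, hσ⟩ := exists_perm_image hcard
  have hbij : Function.Bijective (fun f : Fin k ↪ Fin n => σ.toEmbedding.trans f) := by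
    constructor
    · intro f g hfg
      ext i
      have h3 := congrFun (congrArg (fun (e : Fin k ↪ Fin n) => (e : Fin k → Fin n)) hfg) (σ.symm i)
      simp only [Function.Embedding.trans_apply, Equiv.coe_toEmbedding, Equiv.apply_symm_apply] at h3
      exact congrArg Fin.val h3
    · intro f
      exact ⟨σ.symm.toEmbedding.trans f, by ext i; simp⟩
  rw [← Fintype.sum_bijective _ hbij _ _ (fun f => rfl)]
  have step : ∀ f : Fin k ↪ Fin n,
      ∏ i ∈ T, v ((σ.toEmbedding.trans f) i) = ∏ i : Fin j, v (f (ι i)) := by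
    intro f
    have h1 : ∏ i ∈ T, v (f (σ i)) = ∏ i ∈ T.image σ, v (f i) :=
      (Finset.prod_image (f := fun y => v (f y)) (fun a _ b _ hab => σ.injective hab)).symm
    have h2 : ∏ i ∈ T₀, v (f i) = ∏ i : Fin j, v (f (ι i)) :=
      Finset.prod_image (f := fun y => v (f y)) (fun a _ b _ hab => hιinj hab)
    calc ∏ i ∈ T, v ((σ.toEmbedding.trans f) i) = ∏ i ∈ T, v (f (σ i)) := rfl
      _ = ∏ i ∈ T.image σ, v (f i) := h1
      _ = ∏ i : Fin j, v (f (ι i)) := by rw [hσ]; exact h2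
  rw [Fintype.sum_congr _ _ step]
  exact sum_emb_tail j v k hj hk

lemma udeg_shift {n k : ℕ} (hk : k ≤ n) (ε : Fin n → ℝ) (c : ℝ) :
    udeg n k (fun i => ε i + c)
      = ∑ j ∈ Finset.range (k+1), (k.choose j : ℝ) * c ^ (k - j) * udeg n j ε := by
  classical
  unfold udeg
  rw [sum_inj_eq_sum_emb]
  have expand : ∀ f : Fin k ↪ Fin n,
      ∏ i : Fin k, (ε (f i) + c)
        = ∑ T ∈ (Finset.univ : Finset (Fin k)).powerset, (∏ i ∈ T, ε (f i)) * c ^ (k - T.card) := by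
    intro f
    rw [Finset.prod_add]
    refine Finset.sum_congr rfl (fun T hT => ?_)
    rw [Finset.prod_const, Finset.card_sdiff_of_subset (Finset.mem_powerset.1 hT), Finset.card_univ,
      Fintype.card_fin]
  calc ((Nat.factorial (n - k) : ℝ) / (Nat.factorial n)) * ∑ f : Fin k ↪ Fin n, ∏ i, (ε (f i) + c)
      = ((Nat.factorial (n - k) : ℝ) / (Nat.factorial n)) *
          ∑ T ∈ (Finset.univ : Finset (Fin k)).powerset,
            ∑ f : Fin k ↪ Fin n, (∏ i ∈ T, ε (f i)) * c ^ (k - T.card) := by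
        rw [Fintype.sum_congr _ _ expand, Finset.sum_comm]
    _ = ((Nat.factorial (n - k) : ℝ) / (Nat.factorial n)) *
          ∑ j ∈ Finset.range (k + 1), ∑ T ∈ Finset.powersetCard j (Finset.univ : Finset (Fin k)),
            ∑ f : Fin k ↪ Fin n, (∏ i ∈ T, ε (f i)) * c ^ (k - T.card) := by
        rw [Finset.sum_powerset, Finset.card_univ, Fintype.card_fin]
    _ = ∑ j ∈ Finset.range (k+1), (k.choose j : ℝ) * c ^ (k - j) * udeg n j ε := by
        rw [Finset.mul_sum]
        refine Finset.sum_congr rfl (fun j hj => ?_)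
        have hjk : j ≤ k := by simpa using Nat.lt_succ_iff.1 (Finset.mem_range.1 hj)
        have inner : ∀ T ∈ Finset.powersetCard j (Finset.univ : Finset (Fin k)),
            ∑ f : Fin k ↪ Fin n, (∏ i ∈ T, ε (f i)) * c ^ (k - T.card)
              = ((n - j).descFactorial (k - j) : ℝ) * (∑ g : Fin j ↪ Fin n, ∏ i, ε (g i))
                  * c ^ (k - j) := by
          intro T hT
          have hTc : T.card = j := (Finset.mem_powersetCard.1 hT).2
          rw [← Finset.sum_mul, sum_emb_subset hjk hk ε T hTc, hTc]
        rw [Finset.sum_congr rfl inner, Finset.sum_const, Finset.card_powersetCard,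
          Finset.card_univ, Fintype.card_fin, nsmul_eq_mul]
        unfold udeg
        rw [sum_inj_eq_sum_emb]
        have hfac : ((n - k).factorial : ℝ) * ((n - j).descFactorial (k - j) : ℝ)
            = ((n - j).factorial : ℝ) := by
          rw [← Nat.cast_mul]
          congr 1
          have : n - k = (n - j) - (k - j) := by omega
          rw [this]
          exact Nat.factorial_mul_descFactorial (by omega)
        rw [← hfac]
        ring

lemma taylor_aux (ψ : ℕ → ℝ → ℝ) :
    ∀ p, 1 ≤ p →
    (∀ i < p, ∀ t : ℝ, HasDerivAt (ψ i) (ψ (i+1) t) t) →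
    Continuous (ψ p) →
    ψ 0 1 = (∑ i ∈ Finset.range p, ψ i 0 / i.factorial)
      + (∫ t in (0:ℝ)..1, (1-t)^(p-1) * ψ p t) / (p-1).factorial := by
  intro p
  induction p with
  | zero => omega
  | succ p ih =>
    intro _ hd hc
    rcases Nat.eq_zero_or_pos p with hp0 | hp1
    · subst hp0
      have h1 : ψ 0 1 - ψ 0 0 = ∫ t in (0:ℝ)..1, ψ 1 t :=
        (integral_eq_sub_of_hasDerivAt (fun t _ => hd 0 (by omega) t)
          (hc.intervalIntegrable 0 1)).symm
      simp only [zero_add, show (1:ℕ)-1 = 0 from rfl, pow_zero, one_mul, Finset.sum_range_one,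
        Nat.factorial_zero, Nat.cast_one, div_one]
      linarith
    · have hcψp : Continuous (ψ p) := by
        rw [continuous_iff_continuousAt]
        exact fun t => (hd p (by omega) t).continuousAt
      have hrec := ih hp1 (fun i hi t => hd i (by omega) t) hcψp
      have hc1 : Continuous (fun t : ℝ => -(1-t)^(p-1) * ψ p t) := by fun_prop
      have hc2 : Continuous (fun t : ℝ => (1-t)^p / p * ψ (p+1) t) := by fun_prop
      set G : ℝ → ℝ := fun t => ((1-t)^p / p) * ψ p t with hG
      have hG' : ∀ t : ℝ, HasDerivAt G
          (-(1-t)^(p-1) * ψ p t + ((1-t)^p / p) * ψ (p+1) t) t := by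
        intro t
        have h1 : HasDerivAt (fun t : ℝ => (1-t)^p) ((p : ℝ) * (1-t)^(p-1) * (-1)) t :=
          ((hasDerivAt_id t).const_sub 1).pow p
        have h2 := (h1.div_const (p : ℝ)).mul (hd p (by omega) t)
        refine h2.congr_deriv ?_
        have hp0 : (p : ℝ) ≠ 0 := Nat.cast_ne_zero.2 (by omega)
        field_simp
      have hint : ∫ t in (0:ℝ)..1,
          (-(1-t)^(p-1) * ψ p t + ((1-t)^p / p) * ψ (p+1) t) = G 1 - G 0 :=
        integral_eq_sub_of_hasDerivAt (fun t _ => hG' t)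
          ((hc1.add hc2).intervalIntegrable 0 1)
      have hG1 : G 1 = 0 := by
        have hz : (0:ℝ)^p = 0 := zero_pow (by omega)
        simp [hG, hz]
      have hG0 : G 0 = ψ p 0 / p := by simp [hG]; ring
      rw [integral_add (hc1.intervalIntegrable 0 1) (hc2.intervalIntegrable 0 1)] at hint
      set I1 : ℝ := ∫ t in (0:ℝ)..1, (1-t)^(p-1) * ψ p t with hI1
      set I2 : ℝ := ∫ t in (0:ℝ)..1, (1-t)^p * ψ (p+1) t with hI2
      have hneg : (∫ x in (0:ℝ)..1, -(1-x)^(p-1) * ψ p x) = -I1 := by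
        rw [hI1, ← intervalIntegral.integral_neg]
        congr 1; funext t; ring
      have heq2 : ∫ t in (0:ℝ)..1, (1-t)^p / p * ψ (p+1) t = (1/(p:ℝ)) * I2 := by
        rw [hI2, ← intervalIntegral.integral_const_mul]
        congr 1; funext t; ring
      rw [hneg, heq2, hG1, hG0] at hint
      have hfacR : (p.factorial : ℝ) = (p:ℝ) * ((p-1).factorial : ℝ) := by
        obtain ⟨q, rfl⟩ : ∃ q, p = q + 1 := ⟨p-1, by omega⟩
        push_cast [Nat.factorial_succ]
        ring
      have hp0 : (p:ℝ) ≠ 0 := Nat.cast_ne_zero.2 (by omega)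
      have hf0 : (((p-1).factorial:ℕ):ℝ) ≠ 0 := Nat.cast_ne_zero.2 (Nat.factorial_ne_zero _)
      have key : I1 / ((p-1).factorial : ℝ) = ψ p 0 / p.factorial + I2 / p.factorial := by
        have hI1eq : I1 = ψ p 0 / p + (1/(p:ℝ)) * I2 := by linarith
        rw [hI1eq, hfacR]
        field_simp
      rw [Finset.sum_range_succ, show p+1-1 = p from rfl]
      rw [hrec, key]
      ring

lemma taylor_app {m : ℕ} (j : ℕ) (hj : j ≤ m) (f : ℝ → ℝ) (hf : ContDiff ℝ (m : ℕ∞) f)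
    (a u : ℝ) :
    iteratedDeriv j f (a + u)
      = (∑ i ∈ Finset.range (m - j + 1), u ^ i * iteratedDeriv (j + i) f a / i.factorial)
        + u ^ (m - j) * Jint (m - j) (fun t => iteratedDeriv m f (a + t * u) - iteratedDeriv m f a) := by
  rcases Nat.eq_or_lt_of_le hj with rfl | hjm
  · simp only [Nat.sub_self, Jint, if_pos, pow_zero, one_mul, Finset.sum_range_one,
      Nat.add_zero, Nat.factorial_zero, Nat.cast_one, div_one, ite_true, eq_self_iff_true]
    rw [Finset.sum_range_one]
    simp
  · set p := m - j with hp
    clear_value p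
    have hp1 : 1 ≤ p := by omega
    set ψ : ℕ → ℝ → ℝ := fun i t => u ^ i * iteratedDeriv (j + i) f (a + t * u) with hψ
    have hcont : ∀ r : ℕ, r ≤ m → Continuous (iteratedDeriv r f) := by
      intro r hr
      exact hf.continuous_iteratedDeriv r (by exact_mod_cast hr)
    have hd : ∀ i < p, ∀ t : ℝ, HasDerivAt (ψ i) (ψ (i+1) t) t := by
      intro i hi t
      have hline : HasDerivAt (fun t : ℝ => a + t * u) u t := by
        simpa using ((hasDerivAt_id t).mul_const u).const_add a
      have hdiff : Differentiable ℝ (iteratedDeriv (j + i) f) :=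
        hf.differentiable_iteratedDeriv (j + i) (by exact_mod_cast (by omega : j + i < m))
      have houter : HasDerivAt (iteratedDeriv (j + i) f)
          (iteratedDeriv (j + i + 1) f (a + t * u)) (a + t * u) := by
        have := (hdiff (a + t * u)).hasDerivAt
        rwa [show iteratedDeriv (j + i + 1) f = deriv (iteratedDeriv (j + i) f) from
          iteratedDeriv_succ] 
      have hcomp := (houter.comp t hline).const_mul (u ^ i)
      have : ψ (i+1) t = u ^ i * (iteratedDeriv (j + i + 1) f (a + t * u) * u) := by
        simp only [hψ, show j + (i+1) = j + i + 1 from by omega]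
        ring
      rw [this]
      exact hcomp
    have hcψ : Continuous (ψ p) :=
      continuous_const.mul ((hcont (j + p) (by omega)).comp
        (continuous_const.add (continuous_id.mul continuous_const)))
    have h := taylor_aux ψ p hp1 hd hcψ
    have hψ01 : ψ 0 1 = iteratedDeriv j f (a + u) := by simp [hψ]
    have hψi0 : ∀ i, ψ i 0 = u ^ i * iteratedDeriv (j + i) f a := by intro i; simp [hψ]
    have hjp : j + p = m := by omega
    -- remainder computation
    have hrem : (∫ t in (0:ℝ)..1, (1-t)^(p-1) * ψ p t) / ((p-1).factorial : ℝ)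
        = u ^ p * Jint p (fun t => iteratedDeriv m f (a + t * u) - iteratedDeriv m f a)
          + u ^ p * iteratedDeriv m f a / p.factorial := by
      have hsplit : ∀ t : ℝ, (1-t)^(p-1) * ψ p t
          = u ^ p * ((iteratedDeriv m f (a + t*u) - iteratedDeriv m f a) * (1-t)^(p-1))
            + u ^ p * iteratedDeriv m f a * (1-t)^(p-1) := by
        intro t
        simp only [hψ, hjp]
        ring
      have hint1 : IntervalIntegrable
          (fun t : ℝ => u ^ p * ((iteratedDeriv m f (a + t*u) - iteratedDeriv m f a) * (1-t)^(p-1)))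
          volume 0 1 := by
        apply Continuous.intervalIntegrable
        have := hcont m le_rfl
        fun_prop
      have hint2 : IntervalIntegrable
          (fun t : ℝ => u ^ p * iteratedDeriv m f a * (1-t)^(p-1)) volume 0 1 := by
        apply Continuous.intervalIntegrable; fun_prop
      have hpfac : (p.factorial : ℝ) = (p : ℝ) * ((p-1).factorial : ℝ) := by
        obtain ⟨q, rfl⟩ : ∃ q, p = q + 1 := ⟨p-1, by omega⟩
        push_cast [Nat.factorial_succ]
        ring
      have hpow : (∫ t in (0:ℝ)..1, (1-t)^(p-1)) = 1/(p:ℝ) := by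
        rw [intervalIntegral.integral_comp_sub_left (fun s : ℝ => s^(p-1)) 1]
        simp only [sub_zero, sub_self, integral_pow]
        rw [show p - 1 + 1 = p from by omega, one_pow, zero_pow (show p ≠ 0 by omega)]
        rw [show ((p-1:ℕ):ℝ) + 1 = (p:ℝ) by
          have h9 : p - 1 + 1 = p := by omega
          exact_mod_cast congrArg (fun q : ℕ => (q:ℝ)) h9]
        simp
      have hJ : Jint p (fun t => iteratedDeriv m f (a + t * u) - iteratedDeriv m f a)
          = (∫ t in (0:ℝ)..1,
              (iteratedDeriv m f (a + t*u) - iteratedDeriv m f a) * (1-t)^(p-1))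
            / ((p-1).factorial : ℝ) := by
        rw [Jint, if_neg (by omega)]
      calc (∫ t in (0:ℝ)..1, (1-t)^(p-1) * ψ p t) / ((p-1).factorial : ℝ)
          = ((∫ t in (0:ℝ)..1,
              u ^ p * ((iteratedDeriv m f (a + t*u) - iteratedDeriv m f a) * (1-t)^(p-1)))
             + ∫ t in (0:ℝ)..1, u ^ p * iteratedDeriv m f a * (1-t)^(p-1))
              / ((p-1).factorial : ℝ) := by
            rw [show (fun t : ℝ => (1-t)^(p-1) * ψ p t)
                = fun t : ℝ => u ^ p * ((iteratedDeriv m f (a + t*u) - iteratedDeriv m f a) * (1-t)^(p-1))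
                  + u ^ p * iteratedDeriv m f a * (1-t)^(p-1) from funext hsplit,
              integral_add hint1 hint2]
        _ = (u ^ p * (∫ t in (0:ℝ)..1,
              (iteratedDeriv m f (a + t*u) - iteratedDeriv m f a) * (1-t)^(p-1))
             + u ^ p * iteratedDeriv m f a * (1/(p:ℝ))) / ((p-1).factorial : ℝ) := by
            rw [intervalIntegral.integral_const_mul, intervalIntegral.integral_const_mul, hpow]
        _ = u ^ p * Jint p (fun t => iteratedDeriv m f (a + t * u) - iteratedDeriv m f a)
              + u ^ p * iteratedDeriv m f a / p.factorial := by
            rw [hJ, hpfac]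
            generalize (∫ t in (0:ℝ)..1,
                (iteratedDeriv m f (a + t*u) - iteratedDeriv m f a) * (1-t)^(p-1)) = I
            have hpne : (p:ℝ) ≠ 0 := Nat.cast_ne_zero.2 (by omega)
            have hfne : (((p-1).factorial : ℕ):ℝ) ≠ 0 := Nat.cast_ne_zero.2 (Nat.factorial_ne_zero _)
            field_simp
    rw [hψ01] at h
    have hsum : (∑ i ∈ Finset.range p, ψ i 0 / (i.factorial : ℝ))
        = ∑ i ∈ Finset.range p, u ^ i * iteratedDeriv (j + i) f a / (i.factorial : ℝ) :=
      Finset.sum_congr rfl (fun i _ => by rw [hψi0 i])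
    rw [h, hrem, hsum, Finset.sum_range_succ, hjp]
    ring

lemma udeg_zero (n : ℕ) (v : Fin n → ℝ) : udeg n 0 v = 1 := by
  unfold udeg
  have h1 : (Finset.univ : Finset (Fin 0 → Fin n)).filter Function.Injective = Finset.univ := by
    apply Finset.filter_true_of_mem
    intro p _ a
    exact fun b _ => Subsingleton.elim a b
  rw [h1]
  simp [Finset.card_univ]
  exact Nat.factorial_ne_zero n

lemma udeg_one (n : ℕ) (hn : 0 < n) (v : Fin n → ℝ) : udeg n 1 v = (∑ i, v i) / n := by
  unfold udeg
  have h1 : (Finset.univ : Finset (Fin 1 → Fin n)).filter Function.Injective = Finset.univ := by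
    apply Finset.filter_true_of_mem
    intro p _ a b _
    exact Subsingleton.elim a b
  rw [h1]
  have h2 : ∑ p : Fin 1 → Fin n, ∏ i, v (p i) = ∑ y : Fin n, v y := by
    apply Fintype.sum_bijective (fun p : Fin 1 → Fin n => p 0)
    · constructor
      · intro p q hpq
        funext i
        rw [Subsingleton.elim i 0]
        exact hpq
      · intro y
        exact ⟨fun _ => y, rfl⟩
    · intro p
      rw [Fin.prod_univ_one]
  rw [h2]
  have h3 : (n.factorial : ℝ) = n * ((n-1).factorial : ℝ) := by
    exact_mod_cast congrArg (fun q : ℕ => (q:ℝ)) (Nat.mul_factorial_pred hn.ne').symm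
  rw [h3]
  have hn0 : (n:ℝ) ≠ 0 := Nat.cast_ne_zero.2 (by omega)
  have hf0 : ((n-1).factorial : ℝ) ≠ 0 := Nat.cast_ne_zero.2 (Nat.factorial_ne_zero _)
  field_simp

/-- Univariate High-Order Degenerate Statistical Expansion (Proposition 1). -/
theorem stmt_7 (m n : ℕ) (hm : 2 ≤ m) (hmn : m ≤ n) (hn : 0 < n)
    (f : ℝ → ℝ) (hf : ContDiff ℝ (m : ℕ∞) f) (x : Fin n → ℝ) (θ : ℝ) :
    (f ((∑ j, x j) / n) +
        ∑ k ∈ Finset.Icc 2 m,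
          iteratedDeriv k f ((∑ j, x j) / n) *
            udeg n k (fun j => x j - (∑ j, x j) / n) / (Nat.factorial k))
      = f θ +
          (∑ k ∈ Finset.Icc 1 m,
            iteratedDeriv k f θ * udeg n k (fun j => x j - θ) / (Nat.factorial k)) -
          ∑ k ∈ Finset.range (m + 1),
            (-1 : ℝ) ^ (m - k) *
              Jint (m - k)
                (fun t =>
                  iteratedDeriv m f ((∑ j, x j) / n + t * (θ - (∑ j, x j) / n)) -
                    iteratedDeriv m f ((∑ j, x j) / n)) *
              ((∑ j, x j) / n - θ) ^ (m - k) * udeg n k (fun j => x j - θ) /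
              (Nat.factorial k) := by
  set A : ℝ := (∑ j, x j) / n with hA
  set c : ℝ := θ - A with hc
  set ε : Fin n → ℝ := fun j => x j - θ with hε
  set Δ : ℝ → ℝ := fun t => iteratedDeriv m f (A + t * c) - iteratedDeriv m f A with hΔ
  set E : ℕ → ℝ := fun j => udeg n j ε with hE
  set D : ℕ → ℝ := fun k => iteratedDeriv k f A with hD
  set T : ℕ → ℝ := fun k => D k * udeg n k (fun j => x j - A) / (Nat.factorial k) with hT
  -- the function being shifted
  have hfun : ∀ k : ℕ, udeg n k (fun j => x j - A) = udeg n k (fun j => ε j + c) := by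
    intro k
    congr 1
    funext j
    simp only [hε, hc]
    ring
  have hE0 : E 0 = 1 := udeg_zero n ε
  have hT0 : T 0 = f A := by
    simp only [hT, hD, udeg_zero, iteratedDeriv_zero, Nat.factorial_zero, Nat.cast_one, div_one,
      mul_one]
  have hsum0 : ∑ j, (x j - A) = 0 := by
    rw [Finset.sum_sub_distrib, Finset.sum_const, Finset.card_univ, Fintype.card_fin, hA,
      nsmul_eq_mul]
    field_simp
    ring
  have hT1 : T 1 = 0 := by
    simp only [hT, udeg_one n hn, hsum0]
    simp
  -- Step A : LHS as full sum over range (m+1)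
  have stepA : f A + (∑ k ∈ Finset.Icc 2 m, T k) = ∑ k ∈ Finset.range (m+1), T k := by
    rw [Finset.range_eq_Ico,
      ← Finset.sum_Ico_consecutive T (by omega : (0:ℕ) ≤ 2) (by omega : 2 ≤ m+1),
      show Finset.Ico 0 2 = Finset.range 2 from Nat.Ico_zero_eq_range 2,
      Finset.sum_range_succ, Finset.sum_range_one, hT0, hT1, Finset.Ico_add_one_right_eq_Icc]
    ring
  -- Step B+C+D : evaluate the full sum
  have stepB : ∀ k ∈ Finset.range (m+1),
      T k = ∑ j ∈ Finset.range (k+1),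
        D k * ((k.choose j : ℝ) * c ^ (k-j) * E j) / (Nat.factorial k) := by
    intro k hk
    have hkn : k ≤ n := by
      have := Finset.mem_range.1 hk; omega
    simp only [hT]
    rw [hfun k, udeg_shift hkn ε c, Finset.mul_sum, Finset.sum_div]
  have swap : ∑ k ∈ Finset.range (m+1), T k
      = ∑ j ∈ Finset.range (m+1), ∑ k ∈ Finset.Ico j (m+1),
          D k * ((k.choose j : ℝ) * c ^ (k-j) * E j) / (Nat.factorial k) := by
    rw [Finset.sum_congr rfl stepB]
    have comm := Finset.sum_Ico_Ico_comm 0 (m+1)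
      (fun i j => D j * ((j.choose i : ℝ) * c ^ (j-i) * E i) / (Nat.factorial j))
    simp only [Nat.Ico_zero_eq_range] at comm
    exact comm.symm
  -- inner sums via Taylor
  have inner : ∀ j ∈ Finset.range (m+1),
      (∑ k ∈ Finset.Ico j (m+1), D k * ((k.choose j : ℝ) * c ^ (k-j) * E j) / (Nat.factorial k))
        = iteratedDeriv j f θ * E j / (Nat.factorial j)
          - c ^ (m - j) * Jint (m-j) Δ * E j / (Nat.factorial j) := by
    intro j hj
    have hjm : j ≤ m := by have := Finset.mem_range.1 hj; omega
    have hre : ∑ k ∈ Finset.Ico j (m+1), D k * ((k.choose j : ℝ) * c ^ (k-j) * E j) / (Nat.factorial k)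
        = ∑ i ∈ Finset.range (m-j+1),
            D (j+i) * (((j+i).choose j : ℝ) * c ^ i * E j) / (Nat.factorial (j+i)) := by
      rw [Finset.sum_Ico_eq_sum_range, show m + 1 - j = m - j + 1 from by omega]
      exact Finset.sum_congr rfl (fun i _ => by rw [show j + i - j = i from by omega])
    have hfac : ∀ i : ℕ, (((j+i).choose j : ℝ)) / ((Nat.factorial (j+i)) : ℝ)
        = 1 / ((Nat.factorial j : ℝ) * (Nat.factorial i : ℝ)) := by
      intro i
      have h := Nat.choose_mul_factorial_mul_factorial (show j ≤ j + i by omega)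
      rw [show j + i - j = i by omega] at h
      have h' : (((j+i).choose j : ℝ)) * (Nat.factorial j : ℝ) * (Nat.factorial i : ℝ)
          = ((Nat.factorial (j+i)) : ℝ) := by exact_mod_cast congrArg (fun q : ℕ => (q:ℝ)) h
      rw [div_eq_div_iff (by positivity) (by positivity)]
      linear_combination h'
    have htay := taylor_app j hjm f hf A c
    rw [show A + c = θ by rw [hc]; ring] at htay
    have hΔtay : (fun t => iteratedDeriv m f (A + t * c) - iteratedDeriv m f A) = Δ := rfl
    rw [hΔtay] at htay
    rw [hre]
    have hterm : ∀ i ∈ Finset.range (m-j+1),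
        D (j+i) * (((j+i).choose j : ℝ) * c ^ i * E j) / (Nat.factorial (j+i))
          = (E j / (Nat.factorial j)) * (c ^ i * iteratedDeriv (j+i) f A / (Nat.factorial i)) := by
      intro i _
      have h10 := hfac i
      rw [hD]
      rw [div_eq_div_iff (by positivity) (by positivity)] at h10
      have hj0 : ((Nat.factorial j : ℕ) : ℝ) ≠ 0 := by positivity
      have hi0 : ((Nat.factorial i : ℕ) : ℝ) ≠ 0 := by positivity
      have hji0 : ((Nat.factorial (j+i) : ℕ) : ℝ) ≠ 0 := by positivity
      field_simp
      linear_combination (iteratedDeriv (j+i) f A * c ^ i * E j) * h10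
    rw [Finset.sum_congr rfl hterm, ← Finset.mul_sum]
    rw [show (∑ i ∈ Finset.range (m-j+1), c ^ i * iteratedDeriv (j+i) f A / (Nat.factorial i))
        = iteratedDeriv j f θ - c ^ (m-j) * Jint (m-j) Δ by linarith [htay]]
    ring
  -- assemble RHS pieces
  have main1 : ∑ j ∈ Finset.range (m+1), iteratedDeriv j f θ * E j / (Nat.factorial j)
      = f θ + ∑ k ∈ Finset.Icc 1 m, iteratedDeriv k f θ * E k / (Nat.factorial k) := by
    rw [Finset.range_eq_Ico,
      ← Finset.sum_Ico_consecutive _ (by omega : (0:ℕ) ≤ 1) (by omega : 1 ≤ m+1),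
      show Finset.Ico 0 1 = Finset.range 1 from Nat.Ico_zero_eq_range 1,
      Finset.sum_range_one, hE0, Finset.Ico_add_one_right_eq_Icc, iteratedDeriv_zero]
    simp
  have main2 : ∀ k ∈ Finset.range (m+1),
      c ^ (m-k) * Jint (m-k) Δ * E k / (Nat.factorial k)
        = (-1:ℝ) ^ (m-k) * Jint (m-k) Δ * (A - θ) ^ (m-k) * E k / (Nat.factorial k) := by
    intro k _
    have : ((-1:ℝ)) ^ (m-k) * (A - θ) ^ (m-k) = c ^ (m-k) := by
      rw [← mul_pow, hc]
      ring_nf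
    rw [← this]
    ring
  calc f A + (∑ k ∈ Finset.Icc 2 m, T k) = ∑ k ∈ Finset.range (m+1), T k := stepA
    _ = ∑ j ∈ Finset.range (m+1),
          (iteratedDeriv j f θ * E j / (Nat.factorial j)
            - c ^ (m - j) * Jint (m-j) Δ * E j / (Nat.factorial j)) := by
        rw [swap]; exact Finset.sum_congr rfl inner
    _ = (∑ j ∈ Finset.range (m+1), iteratedDeriv j f θ * E j / (Nat.factorial j))
        - ∑ j ∈ Finset.range (m+1), c ^ (m - j) * Jint (m-j) Δ * E j / (Nat.factorial j) := by
        rw [Finset.sum_sub_distrib]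
    _ = f θ + (∑ k ∈ Finset.Icc 1 m, iteratedDeriv k f θ * E k / (Nat.factorial k))
        - ∑ k ∈ Finset.range (m+1),
            (-1:ℝ) ^ (m-k) * Jint (m-k) Δ * (A - θ) ^ (m-k) * E k / (Nat.factorial k) := by
        rw [main1, Finset.sum_congr rfl main2]
end
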